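/- The matrix mutation in direction k can be written as a product: μ_k(B̃) = (J_{m,k} + E_k) · B̃ · (J_{n,k} + F_k), where J_{m,k} is the diagonal m×m matrix with diagonal entries 1 except −1 in position k, E_k is the m×m matrix whose only nonzero entries are e_{ik} = max(0, −ε b_{ik}) in column k, and F_k is the n×n matrix whose only nonzero entries are f_{kj} = max(0, ε b_{kj}) in row k, for any fixed sign ε ∈ {±1}. -/
import Mathlib


open Matrix

/-- Mutation in direction `k` of an `m × n` real matrix whose rows are indexed by
`Fin n ⊕ Fin p` (the first `n` rows forming the principal part). -/
noncomputable def extMatrixMutation {n p : ℕ} (B : Matrix (Fin n ⊕ Fin p) (Fin n) ℝ) (k : Fin n) :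
    Matrix (Fin n ⊕ Fin p) (Fin n) ℝ :=
  fun i j =>
    if i = Sum.inl k ∨ j = k then -B i j
    else B i j + (|B i k| * B (Sum.inl k) j + B i k * |B (Sum.inl k) j|) / 2

/-- The matrix mutation in direction `k` factors as
`μ_k(B̃) = (J_{m,k} + E_k) ⬝ B̃ ⬝ (J_{n,k} + F_k)`, for either sign `ε = ±1`. -/
theorem extMatrixMutation_eq_mul {n p : ℕ} (B : Matrix (Fin n ⊕ Fin p) (Fin n) ℝ) (k : Fin n)
    (hkk : B (Sum.inl k) k = 0) (ε : ℝ) (hε : ε = 1 ∨ ε = -1) :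
    extMatrixMutation B k =
      (Matrix.diagonal (fun i : Fin n ⊕ Fin p => if i = Sum.inl k then (-1 : ℝ) else 1) +
        (Matrix.of fun i j : Fin n ⊕ Fin p => if j = Sum.inl k then max 0 (-ε * B i k) else 0)) *
      B *
      (Matrix.diagonal (fun j : Fin n => if j = k then (-1 : ℝ) else 1) +
        (Matrix.of fun i j : Fin n => if i = k then max 0 (ε * B (Sum.inl k) j) else 0)) := by
  have hm : ∀ x : ℝ, (0 ⊔ x) = (|x| + x) / 2 := by
    intro x
    rcases le_total 0 x with h | h
    · rw [max_eq_right h, abs_of_nonneg h]; ring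
    · rw [max_eq_left h, abs_of_nonpos h]; ring
  ext i j
  simp only [extMatrixMutation, Matrix.mul_apply, Matrix.add_apply, Matrix.diagonal_apply,
    Matrix.of_apply, add_mul, mul_add, Finset.sum_add_distrib, ite_mul, mul_ite, zero_mul,
    mul_zero, Finset.sum_ite_eq, Finset.sum_ite_eq', Finset.mem_univ, if_true]
  rw [hkk]
  rcases hε with h | h <;> subst h <;>
    by_cases hi : i = Sum.inl k <;> by_cases hj : j = k <;>
      simp only [hi, hj, hkk, if_true, if_false, eq_self_iff_true, or_true, true_or, or_false,
        false_or, iff_false] <;>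
    simp only [hi, hj, hkk, if_neg, hm, abs_neg, neg_mul, one_mul, neg_neg, mul_zero, zero_mul,
      add_zero, abs_zero, if_true, eq_self_iff_true] <;>
    ring
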